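/- arXiv:1109.4246 — 2 statements merged into one kernel-verified Lean document; each statement's English description precedes it below -/
import Mathlib

section
/- Occupation-time rigidity for the degenerate chain (property (⋆)). Let M be the stochastic matrix on {1,2,3} given by M = [[0,1,0],[p,0,1−p],[1−p,0,p]] with p ∈ (0,1). Then for every n ≥ 1 and every sequence (η(1),…,η(n)) ∈ {1,2,3}^n with η(1) = 3 and ∏_{i=1}^{n−1} M(η(i), η(i+1)) > 0 (i.e. a path of positive probability for the chain started at state 3), the difference of occupation times #{1 ≤ i ≤ n : η(i) = 1} − #{1 ≤ i ≤ n : η(i) = 2} equals 1 if η(n) = 1, and equals 0 if η(n) ∈ {2,3}. -/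
/-!
The indicator `φ` of state `1` (`balancePotential`) is a potential for the occupation balance
`[s = 1] - [s = 2]` (`balanceWeight`):
along every transition `a → b` with `M(a, b) ≠ 0` we have `φ b - φ a = [b = 1] - [b = 2]`, the four
transitions violating this (`1 → 1`, `1 → 3`, `2 → 2`, `3 → 2`) being exactly the zero entries
of `M`. Summing along the path telescopes, so for a path started at `3` the difference of the
occupation times of `1` and `2` is `φ (η n)`.
-/

noncomputable section

namespace RFMeta

/-- The degenerate (but ergodic, doubly stochastic) transition matrix on `{1,2,3}`
(encoded as `Fin 3 = {0,1,2}`) with a deterministic transition from state `1` to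
state `2`. -/
def degM (p : ℝ) : Matrix (Fin 3) (Fin 3) ℝ :=
  !![0, 1, 0; p, 0, 1 - p; 1 - p, 0, p]

theorem Fin.sum_univ_succ_sub_castSucc {M : Type*} [AddCommGroup M] {k : ℕ}
    (f : Fin (k + 1) → M) :
    ∑ i : Fin k, (f i.succ - f i.castSucc) = f (Fin.last k) - f 0 := by
  induction k with
  | zero => simp
  | succ k ih =>
    simp only [Fin.sum_univ_castSucc, Fin.succ_castSucc, ih (fun i => f i.castSucc)]
    simp

def balanceWeight : Fin 3 → ℤ := ![1, -1, 0]

def balancePotential : Fin 3 → ℤ := ![1, 0, 0]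

theorem card_filter_sub_card_filter_eq_sum_balanceWeight {ι : Type*} [Fintype ι]
    (η : ι → Fin 3) :
    ((Finset.univ.filter fun i => η i = 0).card : ℤ)
      - ((Finset.univ.filter fun i => η i = 1).card : ℤ) = ∑ i, balanceWeight (η i) := by
  simp only [Finset.card_filter, Nat.cast_sum, ← Finset.sum_sub_distrib]
  refine Finset.sum_congr rfl fun i _ => ?_
  generalize η i = s
  fin_cases s <;> simp [balanceWeight]

theorem balanceWeight_eq_sub_of_degM_ne_zero {p : ℝ} {a b : Fin 3} (h : degM p a b ≠ 0) :
    balanceWeight b = balancePotential b - balancePotential a := by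
  fin_cases a <;> fin_cases b <;> simp_all [degM, balanceWeight, balancePotential]

theorem sum_balanceWeight_eq_balancePotential_last {p : ℝ} {k : ℕ} (η : Fin (k + 1) → Fin 3)
    (hstart : η 0 = 2) (hstep : ∀ i : Fin k, degM p (η i.castSucc) (η i.succ) ≠ 0) :
    ∑ i, balanceWeight (η i) = balancePotential (η (Fin.last k)) := by
  have hsteps : ∑ i : Fin k, balanceWeight (η i.succ)
      = ∑ i : Fin k, (balancePotential (η i.succ) - balancePotential (η i.castSucc)) :=
    Finset.sum_congr rfl fun i _ => balanceWeight_eq_sub_of_degM_ne_zero (hstep i)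
  rw [Fin.sum_univ_succ, hsteps, Fin.sum_univ_succ_sub_castSucc (fun i => balancePotential (η i)),
    hstart]
  simp [balanceWeight, balancePotential]

/-- **Occupation-time rigidity for the degenerate chain (property (⋆)).**
For every path `(η(1),…,η(n))` of positive probability for the chain with transition
matrix `M = [[0,1,0],[p,0,1−p],[1−p,0,p]]` started at state `3`, the difference of the
occupation times of states `1` and `2` equals `1` if `η(n) = 1` and equals `0` if
`η(n) ∈ {2,3}`.  (States `1,2,3` are encoded as `0,1,2 : Fin 3`.) -/
theorem occupation_rigidity_degenerate_chain
    (p : ℝ)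
    (n : ℕ) (hn : 1 ≤ n) (η : Fin n → Fin 3)
    (hstart : η ⟨0, by omega⟩ = 2)
    (hpath : ∀ i : ℕ, ∀ h : i + 1 < n,
      0 < degM p (η ⟨i, by omega⟩) (η ⟨i + 1, h⟩)) :
    (η ⟨n - 1, by omega⟩ = 0 →
      ((Finset.univ.filter fun i => η i = 0).card : ℤ)
        - ((Finset.univ.filter fun i => η i = 1).card : ℤ) = 1) ∧
    (η ⟨n - 1, by omega⟩ = 1 ∨ η ⟨n - 1, by omega⟩ = 2 →
      ((Finset.univ.filter fun i => η i = 0).card : ℤ)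
        - ((Finset.univ.filter fun i => η i = 1).card : ℤ) = 0) := by
  obtain ⟨k, rfl⟩ : ∃ k, n = k + 1 := ⟨n - 1, by omega⟩
  have hbalance := sum_balanceWeight_eq_balancePotential_last η hstart
    fun i => (hpath i (by omega)).ne'
  have hlast : (⟨k + 1 - 1, by omega⟩ : Fin (k + 1)) = Fin.last k := Fin.ext (by simp)
  rw [card_filter_sub_card_filter_eq_sum_balanceWeight, hbalance, hlast]
  refine ⟨fun h => by simp [h, balancePotential], ?_⟩
  rintro (h | h) <;> simp [h, balancePotential]

end RFMeta
end
end

section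
/- Stability vector of the ordered Potts state. Consider the q-state random-field Potts model with uniform field distribution π(b) = 1/q. Let u ≥ 0, let ν = ν_{1,u} ∈ P(E) be defined by ν(1) = (1 + u(q−1))/q and ν(a) = (1−u)/q for a ≠ 1, and let ν̂ ∈ P(E)^{E'} have components ν̂(b)(a) = e^{βν(a)} α[b](a) / Σ_{ā} e^{βν(ā)} α[b](ā). Define v ∈ ℝ^{E'} by v(b) = Σ_{a} (∂F/∂ν(a))(ν) · ν̂(b)(a) + S(ν̂(b)|α[b]) (the gradient of π̃ ↦ φ[π̃](ν̂) at π), and let B := −(v − (1/q)(Σ_{b'} v(b'))·𝟙) be its projection onto the tangent space T P(E'). Then B(1) = ((q−1)/q)·L and B(b) = −(1/q)·L for all b ≠ 1, where L = log( (e^{βu + B} + q − 1)/(e^{βu} + e^{B} + q − 2) ). In particular B = 0 when u = 0, so the disordered state has vanishing stability vector. -/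
/-!
The profile `ν̂(b)` is the Gibbs tilt of `α[b]` by `−dF_ν = βν`, so its relative entropy is
`β⟨ν̂(b), ν⟩ − log Z_b` and cancels the linear term: `v(b) = −log Z_b`. For `ν = ν_{1,u}`,
`e^{βν}` is `e^{β(1−u)/q}` times `e^{βu}` at state `1` and `1` elsewhere, so `Z_b` is a common
factor times `e^{βu+B} + q − 1` for `b = 1` and `e^{βu} + e^B + q − 2` otherwise. Centring a
vector that takes only two values gives `B`.
-/

open MeasureTheory Filter Finset Real Asymptotics Topology

noncomputable section

namespace RFMeta

variable {E E' : Type*}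

set_option linter.unusedSectionVars false
set_option linter.unusedVariables false
/-! ### The free energy functional and the non-degeneracy conditions -/

/-- Relative entropy `S(p|q) = ∑_a p(a) log (p(a)/q(a))`. -/
def relEnt [Fintype E] (p q : E → ℝ) : ℝ := ∑ a, p a * Real.log (p a / q a)

/-- The free energy functional
`φ[π̂](ν̂) = F(∑_b π̂(b) ν̂(b)) + ∑_b π̂(b) S(ν̂(b)|α[b])`. -/
def phiFE [Fintype E] [Fintype E'] (F : (E → ℝ) → ℝ) (α : E' → E → ℝ)
    (ph : E' → ℝ) (νh : E' → E → ℝ) : ℝ :=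
  F (fun a => ∑ b, ph b * νh b a) + ∑ b, ph b * relEnt (νh b) (α b)

/-- Non-degeneracy condition (1), first part: the set of minimizers of `ν̂ ↦ φ[π](ν̂)`
over profiles of probability vectors is exactly the finite family `ν̂_1, …, ν̂_k`. -/
def MinimizersAre [Fintype E] [Fintype E'] (F : (E → ℝ) → ℝ) (α : E' → E → ℝ)
    (pv : E' → ℝ) {k : ℕ} (νhat : Fin k → E' → E → ℝ) : Prop :=
  Function.Injective νhat ∧
    {νh : E' → E → ℝ | (∀ b, νh b ∈ stdSimplex ℝ E) ∧
        ∀ νh' : E' → E → ℝ, (∀ b, νh' b ∈ stdSimplex ℝ E) →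
          phiFE F α pv νh ≤ phiFE F α pv νh'} = Set.range νhat

/-- Non-degeneracy condition (1), second part: the Hessian of the free energy is
positive definite at each minimizer (in the directions tangent to the simplex). -/
def PosDefHessian [Fintype E] [Fintype E'] (F : (E → ℝ) → ℝ) (α : E' → E → ℝ)
    (pv : E' → ℝ) {k : ℕ} (νhat : Fin k → E' → E → ℝ) : Prop :=
  ∀ (j : Fin k) (v : E' → E → ℝ), (∀ b, ∑ a, v b a = 0) → v ≠ 0 →
    0 < iteratedDeriv 2 (fun t : ℝ => phiFE F α pv (fun b a => νhat j b a + t * v b a)) 0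

/-- The vectors `B_j` are the stability vectors: `−B_j` is the differential of the
linearization `π̃ ↦ φ[π̃](ν̂_j)` at `π`, i.e.
`φ[π̃](ν̂_j) − φ[π](ν̂_j) = −⟨B_j, π̃−π⟩ + o(‖π̃−π‖)`. -/
def AreStabilityVectors [Fintype E] [Fintype E'] (F : (E → ℝ) → ℝ) (α : E' → E → ℝ)
    (pv : E' → ℝ) {k : ℕ} (νhat : Fin k → E' → E → ℝ) (B : Fin k → E' → ℝ) : Prop :=
  ∀ j : Fin k,
    (fun pt : E' → ℝ => phiFE F α pt (νhat j) - phiFE F α pv (νhat j)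
        + ∑ b, B j b * (pt b - pv b)) =o[𝓝 pv] fun pt : E' → ℝ => ‖pt - pv‖

/-- The inner product `⟨x, y⟩ = ∑_b x(b) y(b)` on `ℝ^{E'}`. -/
def ip [Fintype E'] (x y : E' → ℝ) : ℝ := ∑ b, x b * y b

/-- The stability region `R_j = {x ∈ T P(E') : ⟨x,B_j⟩ > max_{k≠j} ⟨x,B_k⟩}`. -/
def stabRegion [Fintype E'] {k : ℕ} (B : Fin k → E' → ℝ) (j : Fin k) : Set (E' → ℝ) :=
  {x | (∑ b, x b = 0) ∧ ∀ i, i ≠ j → ip x (B i) < ip x (B j)}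
/-! ### The random-field Potts model -/

/-- The Potts energy `F(ν) = −(β/2) ∑_a ν(a)²`. -/
def pottsF (q : ℕ) (β : ℝ) : (Fin q → ℝ) → ℝ := fun ν => -(β / 2) * ∑ a, ν a ^ 2

/-- The Potts a-priori measures `α[b](a) = e^{B·1_{a=b}} / (e^B + q − 1)`. -/
def pottsAl (q : ℕ) (Bf : ℝ) : Fin q → Fin q → ℝ := fun b a =>
  Real.exp (if a = b then Bf else 0) / (Real.exp Bf + ((q : ℝ) - 1))

lemma pottsAl_pos {q : ℕ} (hq : 1 ≤ q) {Bf : ℝ} (hB : 0 < Bf) (b a : Fin q) :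
    0 < pottsAl q Bf b a := by
  apply div_pos (Real.exp_pos _)
  have h1 : (1 : ℝ) ≤ (q : ℝ) := by exact_mod_cast hq
  have := Real.exp_pos Bf
  linarith

/-- The Potts single-site kernel `γ[b](a|ν) = e^{βν(a)} α[b](a) / ∑_ā e^{βν(ā)} α[b](ā)`
(for the Potts energy one has `−dF_ν(a) = βν(a)`). -/
def gamP (q : ℕ) (β Bf : ℝ) (b : Fin q) (ν : Fin q → ℝ) (a : Fin q) : ℝ :=
  Real.exp (β * ν a) * pottsAl q Bf b a / ∑ a' : Fin q, Real.exp (β * ν a') * pottsAl q Bf b a'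

lemma gamP_mem {q : ℕ} (hq : 1 ≤ q) {β Bf : ℝ} (hB : 0 < Bf) (b : Fin q) (ν : Fin q → ℝ) :
    (fun a => gamP q β Bf b ν a) ∈ stdSimplex ℝ (Fin q) := by
  have : Nonempty (Fin q) := Fin.pos_iff_nonempty.mp hq
  have hD : 0 < ∑ a' : Fin q, Real.exp (β * ν a') * pottsAl q Bf b a' :=
    Finset.sum_pos (fun a' _ => mul_pos (Real.exp_pos _) (pottsAl_pos hq hB b a'))
      Finset.univ_nonempty
  constructor
  · intro a
    exact div_nonneg (mul_pos (Real.exp_pos _) (pottsAl_pos hq hB b a)).le hD.le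
  · simp only [gamP, ← Finset.sum_div]
    exact div_self hD.ne'

/-- The `m`-coordinate marginal of the pure product state
`μ^j[η] = ⊗_i γ[η(i)](·|ν)`, as a point of `P(E^m)`. -/
def prodKerP {q : ℕ} (hq : 1 ≤ q) {β Bf : ℝ} (hB : 0 < Bf) {m : ℕ} (ηm : Fin m → Fin q)
    (ν : Fin q → ℝ) : stdSimplex ℝ (Fin m → Fin q) :=
  ⟨fun σ => ∏ i, gamP q β Bf (ηm i) ν (σ i), by
    constructor
    · intro σ
      exact Finset.prod_nonneg fun i _ => (gamP_mem hq hB (ηm i) ν).1 (σ i)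
    · rw [← Fintype.piFinset_univ, ← Finset.prod_univ_sum]
      rw [Finset.prod_congr rfl fun i _ => (gamP_mem hq hB (ηm i) ν).2]
      exact Finset.prod_const_one⟩

/-- Convex combination `c·x + (1−c)·y` of two points of a simplex. -/
def mixPt {T : Type*} [Fintype T] (c : ℝ) (hc : c ∈ Set.Icc (0:ℝ) 1)
    (x y : stdSimplex ℝ T) : stdSimplex ℝ T :=
  ⟨fun t => c * (x : T → ℝ) t + (1 - c) * (y : T → ℝ) t, by
    have h1 := (convex_stdSimplex ℝ T) x.2 y.2 (a := c) (b := 1 - c) hc.1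
      (by linarith [hc.2]) (by ring)
    have h2 : (fun t => c * (x : T → ℝ) t + (1 - c) * (y : T → ℝ) t)
        = c • (x : T → ℝ) + (1 - c) • (y : T → ℝ) := by
      funext t
      simp [smul_eq_mul]
    rw [h2]
    exact h1⟩

/-- The symmetry-broken Potts profile `ν_{j,u}` with `ν_{j,u}(j) = (1+u(q−1))/q`,
`ν_{j,u}(i) = (1−u)/q` for `i ≠ j`. -/
def nuU (q : ℕ) (u : ℝ) (j : Fin q) : Fin q → ℝ := fun a =>
  if a = j then (1 + u * ((q : ℝ) - 1)) / q else (1 - u) / q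

section FiniteSums

variable {ι : Type*} [Fintype ι] [DecidableEq ι]

lemma sum_ite_eq_add_card_sub_one_mul (w : ι) (x y : ℝ) :
    ∑ b, (if b = w then x else y) = x + ((Fintype.card ι : ℝ) - 1) * y := by
  have hsplit : ∀ b : ι, (if b = w then x else y) = y + if b = w then x - y else 0 := by
    intro b; split_ifs <;> ring
  simp only [hsplit, Finset.sum_add_distrib, Finset.sum_const, Finset.card_univ, nsmul_eq_mul,
    Finset.sum_ite_eq', Finset.mem_univ, if_true]
  ring

lemma sub_mean_of_ite (w b : ι) (K x y : ℝ) :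
    (K + if b = w then x else y)
        - 1 / (Fintype.card ι : ℝ) * ∑ b', (K + if b' = w then x else y)
      = if b = w then ((Fintype.card ι : ℝ) - 1) / Fintype.card ι * (x - y)
        else -(1 / (Fintype.card ι : ℝ)) * (x - y) := by
  have hn : (Fintype.card ι : ℝ) ≠ 0 := by
    exact_mod_cast (Fintype.card_pos_iff.mpr ⟨w⟩).ne'
  rw [Finset.sum_add_distrib, sum_ite_eq_add_card_sub_one_mul, Finset.sum_const,
    Finset.card_univ, nsmul_eq_mul]
  split_ifs <;> field_simp <;> ring

lemma sum_exp_ite_mul_exp_ite (i j : ι) (x y : ℝ) :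
    ∑ a, exp (if a = i then x else 0) * exp (if a = j then y else 0)
      = if j = i then exp (x + y) + ((Fintype.card ι : ℝ) - 1)
        else exp x + exp y + ((Fintype.card ι : ℝ) - 2) := by
  have hsplit : ∀ a, exp (if a = i then x else 0) * exp (if a = j then y else 0)
      = 1 + (if a = i then exp x - 1 else 0) + (if a = j then exp y - 1 else 0)
        + if a = i then (if a = j then (exp x - 1) * (exp y - 1) else 0) else 0 := by
    intro a
    simp only [apply_ite exp, exp_zero]
    split_ifs <;> ring
  simp only [hsplit, @eq_comm _ j i, Finset.sum_add_distrib, Finset.sum_ite_eq', Finset.mem_univ,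
    if_true, Finset.sum_const, Finset.card_univ, nsmul_eq_mul, mul_one]
  split_ifs
  · rw [exp_add]; ring
  · ring

end FiniteSums

lemma relEnt_exp_mul_div_sum [Fintype E] [Nonempty E] (h α : E → ℝ) (hα : ∀ a, 0 < α a) :
    relEnt (fun a => exp (h a) * α a / ∑ a', exp (h a') * α a') α
      = ∑ a, exp (h a) * α a / (∑ a', exp (h a') * α a') * h a
        - log (∑ a, exp (h a) * α a) := by
  set Z := ∑ a', exp (h a') * α a'
  have hZ : 0 < Z := Finset.sum_pos (fun a _ => mul_pos (exp_pos _) (hα a)) Finset.univ_nonempty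
  have hterm : ∀ a, exp (h a) * α a / Z * log (exp (h a) * α a / Z / α a)
      = exp (h a) * α a / Z * h a - exp (h a) * α a / Z * log Z := by
    intro a
    rw [mul_div_right_comm, mul_div_cancel_right₀ _ (hα a).ne', log_div (exp_ne_zero _) hZ.ne',
      log_exp]
    ring
  rw [relEnt, Finset.sum_congr rfl fun a _ => hterm a, Finset.sum_sub_distrib, ← Finset.sum_mul,
    ← Finset.sum_div, div_self hZ.ne', one_mul]

lemma fderiv_pottsF_single (q : ℕ) (β : ℝ) (ν : Fin q → ℝ) (a : Fin q) :
    fderiv ℝ (pottsF q β) ν (Pi.single a 1) = -β * ν a := by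
  have hsq : ∀ a' : Fin q, HasFDerivAt (fun x : Fin q → ℝ => x a' ^ 2)
      ((2 * ν a') • ContinuousLinearMap.proj (R := ℝ) (φ := fun _ : Fin q => ℝ) a') ν := by
    intro a'
    simpa using (hasFDerivAt_apply (𝕜 := ℝ) a' ν).pow 2
  have h : HasFDerivAt (pottsF q β) _ ν :=
    (HasFDerivAt.fun_sum (u := Finset.univ) fun a' _ => hsq a').const_mul (-(β / 2))
  rw [h.fderiv]
  simp only [neg_smul, neg_apply, smul_apply, _root_.sum_apply, ContinuousLinearMap.proj_apply,
    Pi.single_apply, smul_eq_mul, mul_ite, mul_one, mul_zero, sum_ite_eq', mem_univ, ↓reduceIte]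
  ring

lemma sum_fderiv_pottsF_mul_gamP_add_relEnt {q : ℕ} (hq : 1 ≤ q) (β Bf : ℝ) (ν : Fin q → ℝ)
    (b : Fin q) :
    (∑ a, fderiv ℝ (pottsF q β) ν (Pi.single a 1) * gamP q β Bf b ν a)
        + relEnt (fun a => gamP q β Bf b ν a) (pottsAl q Bf b)
      = -log (∑ a, exp (β * ν a) * pottsAl q Bf b a) := by
  have : Nonempty (Fin q) := ⟨⟨0, hq⟩⟩
  have hα : ∀ a, 0 < pottsAl q Bf b a := fun a => by
    have : (1 : ℝ) ≤ q := by exact_mod_cast hq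
    exact div_pos (exp_pos _) (by linarith [exp_pos Bf])
  rw [show relEnt (fun a => gamP q β Bf b ν a) (pottsAl q Bf b) = _ from
    relEnt_exp_mul_div_sum (fun a => β * ν a) _ hα]
  simp only [fderiv_pottsF_single, gamP]
  rw [← add_sub_assoc, ← Finset.sum_add_distrib, Finset.sum_eq_zero fun a _ => by ring,
    zero_sub]

lemma exp_mul_nuU (q : ℕ) (β u : ℝ) (j a : Fin q) :
    exp (β * nuU q u j a) = exp (β * (1 - u) / q) * exp (if a = j then β * u else 0) := by
  have hq : (q : ℝ) ≠ 0 := by exact_mod_cast j.pos.ne'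
  rw [← exp_add, nuU]
  congr 1
  split_ifs <;> field_simp <;> ring

lemma sum_exp_nuU_mul_pottsAl (q : ℕ) (β Bf u : ℝ) (j b : Fin q) :
    ∑ a, exp (β * nuU q u j a) * pottsAl q Bf b a
      = exp (β * (1 - u) / q) / (exp Bf + ((q : ℝ) - 1))
        * if b = j then exp (β * u + Bf) + ((q : ℝ) - 1)
          else exp (β * u) + exp Bf + ((q : ℝ) - 2) := by
  have hterm : ∀ a, exp (β * nuU q u j a) * pottsAl q Bf b a
      = exp (β * (1 - u) / q) / (exp Bf + ((q : ℝ) - 1))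
        * (exp (if a = j then β * u else 0) * exp (if a = b then Bf else 0)) := by
    intro a
    rw [exp_mul_nuU, pottsAl]
    ring
  rw [Finset.sum_congr rfl fun a _ => hterm a, ← Finset.mul_sum, sum_exp_ite_mul_exp_ite,
    Fintype.card_fin]

/-- The paper's state `1` is `⟨0, _⟩ : Fin q`. -/
theorem stability_vector_ordered_potts_state
    (q : ℕ) (hq : 2 ≤ q) (β Bf u : ℝ) :
    -- the ordered profile `ν = ν_{1,u}`
    let ν : Fin q → ℝ := nuU q u ⟨0, by omega⟩
    -- the minimizing profile `ν̂(b) = γ[b](·|ν)`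
    let νh : Fin q → Fin q → ℝ := fun b a => gamP q β Bf b ν a
    -- the gradient `v` of `π̃ ↦ φ[π̃](ν̂)` at `π`:
    -- `v(b) = ∑_a (∂F/∂ν(a))(ν) ν̂(b)(a) + S(ν̂(b)|α[b])`
    let v : Fin q → ℝ := fun b =>
      (∑ a, fderiv ℝ (pottsF q β) ν (Pi.single a 1) * νh b a)
        + relEnt (νh b) (pottsAl q Bf b)
    -- the stability vector: minus the projection of `v` onto `T P(E')`
    let Bv : Fin q → ℝ := fun b => -(v b - (1 / (q : ℝ)) * ∑ b', v b')
    let L : ℝ := Real.log ((Real.exp (β * u + Bf) + ((q : ℝ) - 1))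
      / (Real.exp (β * u) + Real.exp Bf + ((q : ℝ) - 2)))
    Bv ⟨0, by omega⟩ = (((q : ℝ) - 1) / q) * L ∧
    (∀ b : Fin q, b ≠ ⟨0, by omega⟩ → Bv b = -(1 / (q : ℝ)) * L) ∧
    (u = 0 → ∀ b, Bv b = 0) := by
  intro ν νh v Bv L
  set z : Fin q := ⟨0, by omega⟩
  have hqR : (2 : ℝ) ≤ q := by exact_mod_cast hq
  set c := exp (β * (1 - u) / q) / (exp Bf + ((q : ℝ) - 1))
  set A := exp (β * u + Bf) + ((q : ℝ) - 1) with hA_def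
  set D := exp (β * u) + exp Bf + ((q : ℝ) - 2) with hD_def
  have hc : 0 < c := div_pos (exp_pos _) (by linarith [exp_pos Bf])
  have hA : 0 < A := by linarith [exp_pos (β * u + Bf)]
  have hD : 0 < D := by linarith [exp_pos (β * u), exp_pos Bf]
  have hv : ∀ b, v b = -log c + if b = z then -log A else -log D := fun b => by
    rw [show v b = _ from sum_fderiv_pottsF_mul_gamP_add_relEnt (by omega) β Bf ν b,
      sum_exp_nuU_mul_pottsAl]
    split_ifs
    · rw [log_mul hc.ne' hA.ne']; ring
    · rw [log_mul hc.ne' hD.ne']; ring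
  have hBv : ∀ b, Bv b = if b = z then ((q : ℝ) - 1) / q * L else -(1 / (q : ℝ)) * L := by
    intro b
    have hmean := sub_mean_of_ite z b (-log c) (-log A) (-log D)
    rw [Fintype.card_fin] at hmean
    show -(v b - 1 / (q : ℝ) * ∑ b', v b') = _
    simp only [hv]
    rw [hmean, show L = log A - log D from log_div hA.ne' hD.ne']
    split_ifs <;> ring
  refine ⟨by simpa using hBv z, fun b hb => by simpa [hb] using hBv b, fun hu0 b => ?_⟩
  have hAD : A = D := by rw [hA_def, hD_def, hu0, mul_zero, zero_add, exp_zero]; ring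
  have hL0 : L = 0 := by rw [show L = log (A / D) from rfl, hAD, div_self hD.ne', log_one]
  rw [hBv b, hL0]
  simp

end RFMeta
end
end
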